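/- arXiv:1701.04105 — 2 statements merged into one kernel-verified Lean document; each statement's English description precedes it below -/
import Mathlib

section
/- Every finite simple graph with maximum degree at most 2 admits a star 4-edge-coloring, i.e., χ'_s(G) ≤ 4. -/
/-!
Induct on the number of edges. For an edge `vu`, star-color `G - v` by induction and recolor
the at most two edges `vu`, `vw` at `v`. In `G - v` the vertices `u` and `w` have degree at most
one, so each of them sees at most one color on an edge at itself and at most one on an edge one
step further away. A bicolored 4-trail through a new edge `vx` forces the two new colors to
coincide, the color of `vx` to be one of the colors seen from `x`, or the two new colors to
appear crosswise at `w` and `u`. So `vu` only has to avoid the two colors seen from `u` and the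
one at `w`, and `vw` the color of `vu` and the two colors seen from `w`: four colors suffice.
-/

open SimpleGraph

/-- A star `k`-edge-coloring of `G`: a proper edge-coloring (adjacent edges get
distinct colors) such that no path or cycle of length four is bicolored, i.e.
no walk on four pairwise-distinct edges has its first and third edges equally
colored and its second and fourth edges equally colored. -/
def IsStarEdgeColoring {V : Type*} (G : SimpleGraph V) (k : ℕ)
    (c : Sym2 V → Fin k) : Prop :=
  (∀ e₁ ∈ G.edgeSet, ∀ e₂ ∈ G.edgeSet, e₁ ≠ e₂ → (∃ v, v ∈ e₁ ∧ v ∈ e₂) →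
      c e₁ ≠ c e₂) ∧
  (∀ v₀ v₁ v₂ v₃ v₄ : V, G.Adj v₀ v₁ → G.Adj v₁ v₂ → G.Adj v₂ v₃ → G.Adj v₃ v₄ →
    ([s(v₀, v₁), s(v₁, v₂), s(v₂, v₃), s(v₃, v₄)] : List (Sym2 V)).Pairwise (· ≠ ·) →
    ¬(c s(v₀, v₁) = c s(v₂, v₃) ∧ c s(v₁, v₂) = c s(v₃, v₄)))

/-- `G` admits a star `k`-edge-coloring; equivalently, `χ'_s(G) ≤ k`. -/
def StarEdgeColorable {V : Type*} (G : SimpleGraph V) (k : ℕ) : Prop :=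
  ∃ c : Sym2 V → Fin k, IsStarEdgeColoring G k c

/-- The graph `G - x` obtained from `G` by deleting the vertex `x`
(keeping the ambient vertex type; `x` becomes isolated, which does not affect
edge-colorings). -/
def SimpleGraph.deleteVert {V : Type*} (G : SimpleGraph V) (x : V) : SimpleGraph V where
  Adj u w := G.Adj u w ∧ u ≠ x ∧ w ≠ x
  symm := ⟨fun u w h => ⟨h.1.symm, h.2.2, h.2.1⟩⟩
  loopless := ⟨fun u h => G.loopless.irrefl u h.1⟩

/-- `G` is star `k`-critical: `χ'_s(G) > k` but `χ'_s(G - v) ≤ k` for every vertex `v`. -/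
def StarCritical {V : Type*} (G : SimpleGraph V) (k : ℕ) : Prop :=
  ¬ StarEdgeColorable G k ∧ ∀ v : V, StarEdgeColorable (G.deleteVert v) k

/-- The set of colors used by `c` on edges of `H` incident with `u`. -/
def colorsAt {V : Type*} (H : SimpleGraph V) {k : ℕ} (c : Sym2 V → Fin k) (u : V) :
    Set (Fin k) :=
  {a | ∃ w, H.Adj u w ∧ c s(u, w) = a}

section

variable {V : Type*} {k : ℕ} {G : SimpleGraph V}

lemma isStarEdgeColoring_bot (c : Sym2 V → Fin k) : IsStarEdgeColoring ⊥ k c :=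
  ⟨by simp, by simp⟩

lemma IsStarEdgeColoring.ne_of_adj {c : Sym2 V → Fin k} (hc : IsStarEdgeColoring G k c)
    {p q r : V} (hq : G.Adj p q) (hr : G.Adj p r) (hqr : q ≠ r) : c s(p, q) ≠ c s(p, r) :=
  hc.1 _ hq _ hr (mt Sym2.congr_right.mp hqr) ⟨p, Sym2.mem_mk_left _ _, Sym2.mem_mk_left _ _⟩

lemma IsStarEdgeColoring.of_adj {c : Sym2 V → Fin k}
    (hproper : ∀ ⦃p q r⦄, G.Adj p q → G.Adj p r → q ≠ r → c s(p, q) ≠ c s(p, r))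
    (hstar : ∀ ⦃v₀ v₁ v₂ v₃ v₄⦄, G.Adj v₀ v₁ → G.Adj v₁ v₂ → G.Adj v₂ v₃ → G.Adj v₃ v₄ →
      [s(v₀, v₁), s(v₁, v₂), s(v₂, v₃), s(v₃, v₄)].Pairwise (· ≠ ·) →
      ¬(c s(v₀, v₁) = c s(v₂, v₃) ∧ c s(v₁, v₂) = c s(v₃, v₄))) :
    IsStarEdgeColoring G k c := by
  refine ⟨?_, fun _ _ _ _ _ => @hstar _ _ _ _ _⟩
  rintro e₁ he₁ e₂ he₂ hne ⟨p, hp₁, hp₂⟩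
  obtain ⟨q, rfl⟩ := Sym2.mem_iff_exists.mp hp₁
  obtain ⟨r, rfl⟩ := Sym2.mem_iff_exists.mp hp₂
  exact hproper he₁ he₂ (fun hqr => hne (hqr ▸ rfl))

lemma ne_of_pairwise_ne {v₀ v₁ v₂ v₃ v₄ : V}
    (hp : [s(v₀, v₁), s(v₁, v₂), s(v₂, v₃), s(v₃, v₄)].Pairwise (· ≠ ·)) :
    v₀ ≠ v₂ ∧ v₁ ≠ v₃ ∧ v₂ ≠ v₄ := by
  simp only [List.pairwise_cons, List.mem_cons, List.not_mem_nil] at hp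
  refine ⟨?_, ?_, ?_⟩ <;> rintro rfl <;> simp_all

def extendAt {β : Type*} [DecidableEq V] (c : Sym2 V → β) (v : V) (col : V → β) : Sym2 V → β :=
  Sym2.lift ⟨fun x y => if x = v then col y else if y = v then col x else c s(x, y), by
    intro x y
    by_cases hx : x = v <;> by_cases hy : y = v <;> simp [hx, hy, Sym2.eq_swap]⟩

section extendAt

variable {β : Type*} [DecidableEq V] {c : Sym2 V → β} {v : V} {col : V → β}

@[simp]
lemma extendAt_mk_left (x : V) : extendAt c v col s(v, x) = col x := by
  simp [extendAt]

@[simp]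
lemma extendAt_mk_right (x : V) : extendAt c v col s(x, v) = col x := by
  by_cases hx : x = v <;> simp [extendAt, hx]

lemma extendAt_mk_of_ne {x y : V} (hx : x ≠ v) (hy : y ≠ v) :
    extendAt c v col s(x, y) = c s(x, y) := by
  simp [extendAt, hx, hy]

end extendAt

def colorsTwoAway (H : SimpleGraph V) (c : Sym2 V → Fin k) (x : V) : Set (Fin k) :=
  {a | ∃ y z, H.Adj x y ∧ H.Adj y z ∧ z ≠ x ∧ c s(y, z) = a}

structure IsStarExtension (G : SimpleGraph V) (v : V) (c : Sym2 V → Fin k) (col : V → Fin k) :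
    Prop where
  injOn : Set.InjOn col (G.neighborSet v)
  notMem_colorsAt : ∀ ⦃x⦄, G.Adj v x → col x ∉ colorsAt (G.deleteVert v) c x
  notMem_colorsTwoAway : ∀ ⦃x⦄, G.Adj v x → col x ∉ colorsTwoAway (G.deleteVert v) c x
  -- excludes the bicolored trails `x' x v y y'` and 4-cycles `v x m y v`
  not_crossed : ∀ ⦃x y⦄, G.Adj v x → G.Adj v y → x ≠ y →
    col x ∈ colorsAt (G.deleteVert v) c y → col y ∉ colorsAt (G.deleteVert v) c x

namespace IsStarExtension

variable [DecidableEq V] {v : V} {c : Sym2 V → Fin k} {col : V → Fin k}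

lemma ne_of_adj (h : IsStarExtension G v c col) (hc : IsStarEdgeColoring (G.deleteVert v) k c)
    {p q r : V} (hq : G.Adj p q) (hr : G.Adj p r) (hqr : q ≠ r) :
    extendAt c v col s(p, q) ≠ extendAt c v col s(p, r) := by
  by_cases hp : p = v
  · subst hp
    rw [extendAt_mk_left, extendAt_mk_left]
    exact fun he => hqr (h.injOn hq hr he)
  by_cases hqv : q = v
  · subst hqv
    rw [extendAt_mk_right, extendAt_mk_of_ne hp hqr.symm]
    exact fun he => h.notMem_colorsAt hq.symm ⟨r, ⟨hr, hp, hqr.symm⟩, he.symm⟩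
  by_cases hrv : r = v
  · subst hrv
    rw [extendAt_mk_of_ne hp hqv, extendAt_mk_right]
    exact fun he => h.notMem_colorsAt hr.symm ⟨q, ⟨hq, hp, hqv⟩, he⟩
  rw [extendAt_mk_of_ne hp hqv, extendAt_mk_of_ne hp hrv]
  exact hc.ne_of_adj ⟨hq, hp, hqv⟩ ⟨hr, hp, hrv⟩ hqr

lemma not_bicolored_of_ne (h : IsStarExtension G v c col)
    (hc : IsStarEdgeColoring (G.deleteVert v) k c)
    {v₀ v₁ v₂ v₃ v₄ : V} (h₀₁ : G.Adj v₀ v₁) (h₁₂ : G.Adj v₁ v₂) (h₂₃ : G.Adj v₂ v₃)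
    (h₃₄ : G.Adj v₃ v₄) (hp : [s(v₀, v₁), s(v₁, v₂), s(v₂, v₃), s(v₃, v₄)].Pairwise (· ≠ ·))
    (e₁ : v₁ ≠ v) (e₂ : v₂ ≠ v) (e₃ : v₃ ≠ v) :
    ¬(extendAt c v col s(v₀, v₁) = extendAt c v col s(v₂, v₃) ∧
      extendAt c v col s(v₁, v₂) = extendAt c v col s(v₃, v₄)) := by
  rintro ⟨hA, hB⟩
  have n₁₃ := (ne_of_pairwise_ne hp).2.1
  rw [extendAt_mk_of_ne e₂ e₃] at hA
  rw [extendAt_mk_of_ne e₁ e₂] at hB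
  by_cases e₀ : v₀ = v <;> by_cases e₄ : v₄ = v
  · subst e₀ e₄
    rw [extendAt_mk_left] at hA
    rw [extendAt_mk_right] at hB
    refine h.not_crossed h₀₁ h₃₄.symm n₁₃ ?_ ⟨v₂, ⟨h₁₂, e₁, e₂⟩, hB⟩
    exact ⟨v₂, ⟨h₂₃.symm, e₃, e₂⟩, by rw [Sym2.eq_swap, hA]⟩
  · subst e₀
    rw [extendAt_mk_left] at hA
    exact h.notMem_colorsTwoAway h₀₁ ⟨v₂, v₃, ⟨h₁₂, e₁, e₂⟩, ⟨h₂₃, e₂, e₃⟩, n₁₃.symm, hA.symm⟩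
  · subst e₄
    rw [extendAt_mk_right] at hB
    exact h.notMem_colorsTwoAway h₃₄.symm
      ⟨v₂, v₁, ⟨h₂₃.symm, e₃, e₂⟩, ⟨h₁₂.symm, e₂, e₁⟩, n₁₃, by rw [Sym2.eq_swap, hB]⟩
  rw [extendAt_mk_of_ne e₀ e₁] at hA
  rw [extendAt_mk_of_ne e₃ e₄] at hB
  exact hc.2 v₀ v₁ v₂ v₃ v₄ ⟨h₀₁, e₀, e₁⟩ ⟨h₁₂, e₁, e₂⟩ ⟨h₂₃, e₂, e₃⟩ ⟨h₃₄, e₃, e₄⟩ hp ⟨hA, hB⟩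

lemma not_bicolored (h : IsStarExtension G v c col) (hc : IsStarEdgeColoring (G.deleteVert v) k c)
    {v₀ v₁ v₂ v₃ v₄ : V} (h₀₁ : G.Adj v₀ v₁) (h₁₂ : G.Adj v₁ v₂) (h₂₃ : G.Adj v₂ v₃)
    (h₃₄ : G.Adj v₃ v₄) (hp : [s(v₀, v₁), s(v₁, v₂), s(v₂, v₃), s(v₃, v₄)].Pairwise (· ≠ ·)) :
    ¬(extendAt c v col s(v₀, v₁) = extendAt c v col s(v₂, v₃) ∧
      extendAt c v col s(v₁, v₂) = extendAt c v col s(v₃, v₄)) := by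
  rintro ⟨hA, hB⟩
  obtain ⟨n₀₂, n₁₃, n₂₄⟩ := ne_of_pairwise_ne hp
  by_cases e₂ : v₂ = v
  · subst e₂
    rw [extendAt_mk_of_ne n₀₂ h₁₂.ne, extendAt_mk_left] at hA
    rw [extendAt_mk_right, extendAt_mk_of_ne h₂₃.ne' n₂₄.symm] at hB
    refine h.not_crossed h₂₃ h₁₂.symm n₁₃.symm ?_ ⟨v₄, ⟨h₃₄, h₂₃.ne', n₂₄.symm⟩, hB.symm⟩
    exact ⟨v₀, ⟨h₀₁.symm, h₁₂.ne, n₀₂⟩, by rw [Sym2.eq_swap, hA]⟩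
  by_cases e₁ : v₁ = v
  · subst e₁
    rw [extendAt_mk_left] at hB
    by_cases e₄ : v₄ = v₁
    · subst e₄
      rw [extendAt_mk_right] at hB
      exact h₂₃.ne (h.injOn h₁₂ h₃₄.symm hB)
    rw [extendAt_mk_of_ne n₁₃.symm e₄] at hB
    exact h.notMem_colorsTwoAway h₁₂
      ⟨v₃, v₄, ⟨h₂₃, e₂, n₁₃.symm⟩, ⟨h₃₄, n₁₃.symm, e₄⟩, n₂₄.symm, hB.symm⟩
  by_cases e₃ : v₃ = v
  · subst e₃
    rw [extendAt_mk_right] at hA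
    by_cases e₀ : v₀ = v₃
    · subst e₀
      rw [extendAt_mk_left] at hA
      exact h₁₂.ne (h.injOn h₀₁ h₂₃.symm hA)
    rw [extendAt_mk_of_ne e₀ e₁] at hA
    exact h.notMem_colorsTwoAway h₂₃.symm
      ⟨v₁, v₀, ⟨h₁₂.symm, e₂, e₁⟩, ⟨h₀₁.symm, e₁, e₀⟩, n₀₂, by rw [Sym2.eq_swap, hA]⟩
  exact h.not_bicolored_of_ne hc h₀₁ h₁₂ h₂₃ h₃₄ hp e₁ e₂ e₃ ⟨hA, hB⟩

lemma isStarEdgeColoring (h : IsStarExtension G v c col)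
    (hc : IsStarEdgeColoring (G.deleteVert v) k c) : IsStarEdgeColoring G k (extendAt c v col) :=
  .of_adj (fun _ _ _ => h.ne_of_adj hc) (fun _ _ _ _ _ => h.not_bicolored hc)

end IsStarExtension

lemma SimpleGraph.deleteVert_lt {v u : V} (hvu : G.Adj v u) : G.deleteVert v < G :=
  lt_of_le_of_ne (fun _ _ h => h.1) fun h => by
    rw [← h] at hvu
    exact hvu.2.1 rfl

lemma subsingleton_neighborSet_diff_singleton {x p : V} (hx : (G.neighborSet x).encard ≤ 2)
    (hp : G.Adj x p) : (G.neighborSet x \ {p}).Subsingleton := by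
  rw [← Set.encard_le_one_iff_subsingleton]
  rw [← Set.encard_sdiff_singleton_add_one (show p ∈ G.neighborSet x from hp)] at hx
  exact (ENat.add_le_add_iff_right ENat.one_ne_top).mp hx

lemma exists_adj_forall_adj_eq_or_eq {v u : V} (hv : (G.neighborSet v).encard ≤ 2)
    (hu : G.Adj v u) : ∃ w, G.Adj v w ∧ ∀ x, G.Adj v x → x = u ∨ x = w := by
  rcases (subsingleton_neighborSet_diff_singleton hv hu).eq_empty_or_singleton with h | ⟨w, h⟩
  · refine ⟨u, hu, fun x hx => .inl ?_⟩
    by_contra hxu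
    exact (Set.eq_empty_iff_forall_notMem.mp h) x ⟨hx, hxu⟩
  · have hw : w ∈ G.neighborSet v \ {u} := h ▸ rfl
    refine ⟨w, hw.1, fun x hx => or_iff_not_imp_left.mpr fun hxu => ?_⟩
    exact (h ▸ ⟨hx, hxu⟩ : x ∈ ({w} : Set V))

lemma colorsAt_deleteVert_subsingleton {v x : V} (hx : (G.neighborSet x).encard ≤ 2)
    (hvx : G.Adj v x) (c : Sym2 V → Fin k) : (colorsAt (G.deleteVert v) c x).Subsingleton := by
  rintro _ ⟨y, hy, rfl⟩ _ ⟨z, hz, rfl⟩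
  rw [subsingleton_neighborSet_diff_singleton hx hvx.symm ⟨hy.1, hy.2.2⟩ ⟨hz.1, hz.2.2⟩]

lemma colorsTwoAway_deleteVert_subsingleton (hG : ∀ x, (G.neighborSet x).encard ≤ 2) {v x : V}
    (hvx : G.Adj v x) (c : Sym2 V → Fin k) :
    (colorsTwoAway (G.deleteVert v) c x).Subsingleton := by
  rintro _ ⟨y, z, hxy, hyz, hzx, rfl⟩ _ ⟨y', z', hxy', hyz', hzx', rfl⟩
  obtain rfl : y = y' :=
    subsingleton_neighborSet_diff_singleton (hG x) hvx.symm ⟨hxy.1, hxy.2.2⟩ ⟨hxy'.1, hxy'.2.2⟩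
  obtain rfl : z = z' :=
    subsingleton_neighborSet_diff_singleton (hG y) hxy.1.symm ⟨hyz.1, hzx⟩ ⟨hyz'.1, hzx'⟩
  rfl

lemma exists_notMem_of_subsingleton {α : Type*} [Fintype α] (hα : 3 < Fintype.card α)
    {s₁ s₂ s₃ : Set α} (h₁ : s₁.Subsingleton) (h₂ : s₂.Subsingleton) (h₃ : s₃.Subsingleton) :
    ∃ a, a ∉ s₁ ∧ a ∉ s₂ ∧ a ∉ s₃ := by
  by_contra! h
  rw [← Set.encard_le_one_iff_subsingleton] at h₁ h₂ h₃
  have hcover : Set.univ ⊆ s₁ ∪ s₂ ∪ s₃ := fun a _ => by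
    by_cases ha₁ : a ∈ s₁
    · exact .inl (.inl ha₁)
    by_cases ha₂ : a ∈ s₂
    · exact .inl (.inr ha₂)
    exact .inr (h a ha₁ ha₂)
  have : (Fintype.card α : ℕ∞) ≤ 3 := calc
    (Fintype.card α : ℕ∞) = (Set.univ : Set α).encard := by simp
    _ ≤ (s₁ ∪ s₂ ∪ s₃).encard := Set.encard_le_encard hcover
    _ ≤ s₁.encard + s₂.encard + s₃.encard :=
      (Set.encard_union_le _ _).trans (by gcongr; exact Set.encard_union_le _ _)
    _ ≤ 1 + 1 + 1 := by gcongr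
    _ = 3 := by norm_num
  exact absurd (by exact_mod_cast this) hα.not_ge

lemma exists_isStarExtension (hk : 3 < k) (hG : ∀ x, (G.neighborSet x).encard ≤ 2) {v u : V}
    (hvu : G.Adj v u) (c : Sym2 V → Fin k) : ∃ col, IsStarExtension G v c col := by
  classical
  obtain ⟨w, hvw, hN⟩ := exists_adj_forall_adj_eq_or_eq (hG v) hvu
  have hcard : 3 < Fintype.card (Fin k) := by simpa using hk
  obtain ⟨a, haS, haT, haS'⟩ := exists_notMem_of_subsingleton hcard
    (colorsAt_deleteVert_subsingleton (hG u) hvu c) (colorsTwoAway_deleteVert_subsingleton hG hvu c)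
    (colorsAt_deleteVert_subsingleton (hG w) hvw c)
  obtain ⟨b, hb, hbS, hbT⟩ := exists_notMem_of_subsingleton hcard
    (Set.subsingleton_singleton (a := a)) (colorsAt_deleteVert_subsingleton (hG w) hvw c)
    (colorsTwoAway_deleteVert_subsingleton hG hvw c)
  have hba : b ≠ a := hb
  let col : V → Fin k := fun x => if x = u then a else b
  have hcol : ∀ x, G.Adj v x → (x = u ∧ col x = a) ∨ (x = w ∧ x ≠ u ∧ col x = b) := by
    intro x hx
    by_cases hxu : x = u
    · exact .inl ⟨hxu, if_pos hxu⟩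
    · exact .inr ⟨(hN x hx).resolve_left hxu, hxu, if_neg hxu⟩
  refine ⟨col, ?_, ?_, ?_, ?_⟩
  · intro x hx y hy hxy
    rcases hcol x hx with ⟨rfl, hx'⟩ | ⟨rfl, -, hx'⟩ <;>
      rcases hcol y hy with ⟨rfl, hy'⟩ | ⟨rfl, -, hy'⟩ <;> simp_all
  · intro x hx
    rcases hcol x hx with ⟨rfl, hx'⟩ | ⟨rfl, -, hx'⟩ <;> rwa [hx']
  · intro x hx
    rcases hcol x hx with ⟨rfl, hx'⟩ | ⟨rfl, -, hx'⟩ <;> rwa [hx']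
  · intro x y hx hy hxy
    rcases hcol x hx with ⟨rfl, hx'⟩ | ⟨rfl, -, hx'⟩ <;>
      rcases hcol y hy with ⟨rfl, hy'⟩ | ⟨rfl, -, hy'⟩
    · exact absurd rfl hxy
    · rw [hx']; exact fun h => absurd h haS'
    · rw [hy']; exact fun _ => haS'
    · exact absurd rfl hxy

lemma StarEdgeColorable.of_deleteVert (hk : 3 < k) (hG : ∀ x, (G.neighborSet x).encard ≤ 2)
    {v u : V} (hvu : G.Adj v u) (h : StarEdgeColorable (G.deleteVert v) k) :
    StarEdgeColorable G k := by
  classical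
  obtain ⟨c, hc⟩ := h
  obtain ⟨col, hcol⟩ := exists_isStarExtension hk hG hvu c
  exact ⟨extendAt c v col, hcol.isStarEdgeColoring hc⟩

theorem starEdgeColorable_of_encard_neighborSet_le_two [Finite V] (hk : 3 < k)
    (hG : ∀ x, (G.neighborSet x).encard ≤ 2) : StarEdgeColorable G k := by
  induction hn : G.edgeSet.ncard using Nat.strong_induction_on generalizing G with
  | _ n ih =>
  rcases eq_or_ne G ⊥ with rfl | hne
  · exact ⟨fun _ => ⟨0, by omega⟩, isStarEdgeColoring_bot _⟩
  obtain ⟨v, u, hvu⟩ := ne_bot_iff_exists_adj.mp hne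
  have hlt : (G.deleteVert v).edgeSet.ncard < n :=
    hn ▸ Set.ncard_lt_ncard (edgeSet_ssubset_edgeSet.mpr (G.deleteVert_lt hvu))
  refine .of_deleteVert hk hG hvu (ih _ hlt (fun x => ?_) rfl)
  exact (hG x).trans' (Set.encard_le_encard (neighborSet_mono (G.deleteVert_lt hvu).le x))

end

theorem star_four_colorable_of_maxDegree_le_two_general {V : Type*} [Fintype V]
    (G : SimpleGraph V) [DecidableRel G.Adj]
    (hdeg : ∀ v : V, G.degree v ≤ 2) :
    StarEdgeColorable G 4 := by
  refine starEdgeColorable_of_encard_neighborSet_le_two (by norm_num) fun v => ?_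
  rw [← coe_neighborFinset, Set.encard_coe_eq_coe_finsetCard, card_neighborFinset_eq_degree]
  exact_mod_cast hdeg v

/-- Every finite simple graph with maximum degree at most `2` is star `4`-edge-colorable. -/
theorem star_four_colorable_of_maxDegree_le_two {V : Type*} [Fintype V] [DecidableEq V]
    (G : SimpleGraph V) [DecidableRel G.Adj]
    (hdeg : ∀ v : V, G.degree v ≤ 2) :
    StarEdgeColorable G 4 :=
  star_four_colorable_of_maxDegree_le_two_general G hdeg
end

section
/- Let k ∈ {5,6}, let G be a star k-critical subcubic simple graph, let x be a vertex of G of degree 1 with neighbor y, let H = G − x, and let c be a star k-edge-coloring of H with color set {1,…,k}. Then c(N_H(y)) = {1,…,k}, and y has degree 3 in G. -/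
open SimpleGraph

/-
A color `a` missing from all edges at the neighbors of `y` in `H = G - x` can be given to the
pendant edge `xy`: since `x` is a leaf, `xy` can only be an end edge of a path of length four,
and the edge two steps away from it is incident with a neighbor of `y`, so it does not have
color `a`. This would star `k`-color `G`, contradicting criticality; hence those edges see all
`k` colors. If `y` had degree at most `2`, it would have at most one neighbor `u` in `H`, and
then all `k ≥ 5` colors would appear at `u`, which has degree at most `3`.
-/

namespace SimpleGraph

variable {V : Type*} {G : SimpleGraph V} {x y : V}

lemma deleteVert_le (G : SimpleGraph V) (x : V) : G.deleteVert x ≤ G := fun _ _ h => h.1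

lemma mem_edgeSet_deleteVert {e : Sym2 V} :
    e ∈ (G.deleteVert x).edgeSet ↔ e ∈ G.edgeSet ∧ x ∉ e := by
  induction e using Sym2.ind with
  | _ => simp [deleteVert, eq_comm]

lemma eq_of_adj_of_degree_eq_one [Fintype (G.neighborSet x)] (hx : G.degree x = 1)
    (hxy : G.Adj x y) {w : V} (hxw : G.Adj x w) : w = y := by
  obtain ⟨z, -, hz⟩ := degree_eq_one_iff_existsUnique_adj.mp hx
  exact (hz w hxw).trans (hz y hxy).symm

lemma subsingleton_neighborSet_deleteVert [Fintype V] [DecidableRel G.Adj]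
    (hyx : G.Adj y x) (hdeg : G.degree y ≤ 2) :
    ((G.deleteVert x).neighborSet y).Subsingleton := by
  classical
  have hcard : ((G.neighborFinset y).erase x).card ≤ 1 := by
    rw [Finset.card_erase_of_mem ((mem_neighborFinset _ _ _).2 hyx),
      card_neighborFinset_eq_degree]
    omega
  intro u hu w hw
  exact Finset.card_le_one.mp hcard u (by simp [hu.1, hu.2.2]) w (by simp [hw.1, hw.2.2])

section Leaf

variable (hleaf : ∀ w, G.Adj x w → w = y)
include hleaf

lemma eq_of_mem_edgeSet_of_mem {e : Sym2 V} (he : e ∈ G.edgeSet) (hxe : x ∈ e) :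
    e = s(x, y) := by
  induction e using Sym2.ind with
  | _ u w =>
    rcases Sym2.mem_iff.mp hxe with rfl | rfl
    · rw [hleaf w he]
    · rw [hleaf u he.symm, Sym2.eq_swap]

lemma ne_of_adj_of_adj_of_ne {u v w : V} (huv : G.Adj u v) (hvw : G.Adj v w) (huw : u ≠ w) :
    v ≠ x := by
  rintro rfl
  exact huw ((hleaf u huv.symm).trans (hleaf w hvw).symm)

end Leaf

section Extension

variable {k : ℕ} {c : Sym2 V → Fin k} {a : Fin k}
  (hleaf : ∀ w, G.Adj x w → w = y)
  (ha : a ∉ ⋃ u ∈ (G.deleteVert x).neighborSet y, colorsAt (G.deleteVert x) c u)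
include hleaf ha

lemma color_ne_of_mem_edgeSet_of_mem {e : Sym2 V} (he : e ∈ G.edgeSet) (hne : e ≠ s(x, y))
    {v : V} (hv : v ∈ s(x, y)) (hve : v ∈ e) : c e ≠ a := by
  have hxe : x ∉ e := fun hxe => hne (eq_of_mem_edgeSet_of_mem hleaf he hxe)
  obtain rfl : v = y := (Sym2.mem_iff.mp hv).resolve_left (by rintro rfl; exact hxe hve)
  have heH : e ∈ (G.deleteVert x).edgeSet := mem_edgeSet_deleteVert.2 ⟨he, hxe⟩
  induction e using Sym2.ind with
  | _ u w =>
    have huw : (G.deleteVert x).Adj u w := heH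
    rcases Sym2.mem_iff.mp hve with rfl | rfl
    · exact fun h => ha (Set.mem_biUnion huw ⟨v, huw.symm, by rw [Sym2.eq_swap, h]⟩)
    · exact fun h => ha (Set.mem_biUnion huw.symm ⟨v, huw, h⟩)

lemma isStarEdgeColoring_update [DecidableEq V]
    (hc : IsStarEdgeColoring (G.deleteVert x) k c) :
    IsStarEdgeColoring G k (Function.update c s(x, y) a) := by
  have hupdate {u w : V} (hu : u ≠ x) (hw : w ≠ x) :
      Function.update c s(x, y) a s(u, w) = c s(u, w) :=
    Function.update_of_ne (by simp [hu, hw]) _ _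
  constructor
  · rintro e₁ he₁ e₂ he₂ hne ⟨v, hv₁, hv₂⟩
    by_cases h₁ : e₁ = s(x, y) <;> by_cases h₂ : e₂ = s(x, y)
    · exact absurd (h₁.trans h₂.symm) hne
    · subst h₁
      rw [Function.update_self, Function.update_of_ne h₂]
      exact (color_ne_of_mem_edgeSet_of_mem hleaf ha he₂ h₂ hv₁ hv₂).symm
    · subst h₂
      rw [Function.update_self, Function.update_of_ne h₁]
      exact color_ne_of_mem_edgeSet_of_mem hleaf ha he₁ h₁ hv₂ hv₁
    · rw [Function.update_of_ne h₁, Function.update_of_ne h₂]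
      refine hc.1 e₁ (mem_edgeSet_deleteVert.2 ⟨he₁, fun hx => h₁ ?_⟩)
        e₂ (mem_edgeSet_deleteVert.2 ⟨he₂, fun hx => h₂ ?_⟩) hne ⟨v, hv₁, hv₂⟩
      exacts [eq_of_mem_edgeSet_of_mem hleaf he₁ hx, eq_of_mem_edgeSet_of_mem hleaf he₂ hx]
  · rintro v₀ v₁ v₂ v₃ v₄ h₀₁ h₁₂ h₂₃ h₃₄ hpw ⟨hc₀₂, hc₁₃⟩
    have hx₁ := ne_of_adj_of_adj_of_ne hleaf h₀₁ h₁₂ (by rintro rfl; simp [Sym2.eq_swap] at hpw)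
    have hx₂ := ne_of_adj_of_adj_of_ne hleaf h₁₂ h₂₃ (by rintro rfl; simp [Sym2.eq_swap] at hpw)
    have hx₃ := ne_of_adj_of_adj_of_ne hleaf h₂₃ h₃₄ (by rintro rfl; simp [Sym2.eq_swap] at hpw)
    have hmiss {u w : V} (hyu : (G.deleteVert x).Adj y u) (huw : (G.deleteVert x).Adj u w) :
        c s(u, w) ≠ a := fun h => ha (Set.mem_biUnion hyu ⟨w, huw, h⟩)
    by_cases hx₀ : v₀ = x
    · subst hx₀
      obtain rfl := hleaf v₁ h₀₁
      rw [Function.update_self, hupdate hx₂ hx₃] at hc₀₂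
      exact hmiss ⟨h₁₂, hx₁, hx₂⟩ ⟨h₂₃, hx₂, hx₃⟩ hc₀₂.symm
    by_cases hx₄ : v₄ = x
    · subst hx₄
      obtain rfl := hleaf v₃ h₃₄.symm
      rw [Sym2.eq_swap (a := v₃), Function.update_self, hupdate hx₁ hx₂, Sym2.eq_swap] at hc₁₃
      exact hmiss ⟨h₂₃.symm, hx₃, hx₂⟩ ⟨h₁₂.symm, hx₂, hx₁⟩ hc₁₃
    rw [hupdate hx₀ hx₁, hupdate hx₂ hx₃] at hc₀₂
    rw [hupdate hx₁ hx₂, hupdate hx₃ hx₄] at hc₁₃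
    exact hc.2 v₀ v₁ v₂ v₃ v₄ ⟨h₀₁, hx₀, hx₁⟩ ⟨h₁₂, hx₁, hx₂⟩ ⟨h₂₃, hx₂, hx₃⟩ ⟨h₃₄, hx₃, hx₄⟩ hpw
      ⟨hc₀₂, hc₁₃⟩

lemma starEdgeColorable_of_notMem_colorsAt (hc : IsStarEdgeColoring (G.deleteVert x) k c) :
    StarEdgeColorable G k := by
  classical
  exact ⟨_, isStarEdgeColoring_update hleaf ha hc⟩

end Extension

lemma ncard_colorsAt_le_degree {H : SimpleGraph V} (hHG : H ≤ G) {k : ℕ} (c : Sym2 V → Fin k)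
    (u : V) [Fintype (G.neighborSet u)] : (colorsAt H c u).ncard ≤ G.degree u := by
  have hsub := neighborSet_mono hHG u
  have himage : colorsAt H c u = (fun w => c s(u, w)) '' H.neighborSet u := by
    ext; simp [colorsAt]
  calc (colorsAt H c u).ncard
      ≤ (H.neighborSet u).ncard := himage ▸ Set.ncard_image_le ((Set.toFinite _).subset hsub)
    _ ≤ (G.neighborSet u).ncard := Set.ncard_le_ncard hsub
    _ = G.degree u := by
      rw [Set.ncard_eq_toFinset_card', Set.toFinset_card, card_neighborSet_eq_degree]

end SimpleGraph

theorem lemma1a_general {V : Type*} [Fintype V] (G : SimpleGraph V)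
    [DecidableRel G.Adj] (hsub : ∀ v : V, G.degree v ≤ 3)
    (k : ℕ) (hk : k = 5 ∨ k = 6) (hcrit : StarCritical G k)
    (x y : V) (hx : G.degree x = 1) (hxy : G.Adj x y)
    (c : Sym2 V → Fin k) (hc : IsStarEdgeColoring (G.deleteVert x) k c) :
    (⋃ u ∈ (G.deleteVert x).neighborSet y, colorsAt (G.deleteVert x) c u) = Set.univ ∧
      G.degree y = 3 := by
  have hleaf (w : V) : G.Adj x w → w = y := eq_of_adj_of_degree_eq_one hx hxy
  have hcover : (⋃ u ∈ (G.deleteVert x).neighborSet y, colorsAt (G.deleteVert x) c u) =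
      Set.univ := by
    by_contra h
    obtain ⟨a, ha⟩ := (Set.ne_univ_iff_exists_notMem _).mp h
    exact hcrit.1 (starEdgeColorable_of_notMem_colorsAt hleaf ha hc)
  refine ⟨hcover, le_antisymm (hsub y) ?_⟩
  by_contra! hdeg
  obtain hempty | ⟨u, hu⟩ :=
    (subsingleton_neighborSet_deleteVert hxy.symm (by omega)).eq_empty_or_singleton
  · have : NeZero k := ⟨by omega⟩
    rw [hempty, Set.biUnion_empty] at hcover
    exact Set.empty_ne_univ hcover
  · have hcard := ncard_colorsAt_le_degree (G.deleteVert_le x) c u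
    rw [hu, Set.biUnion_singleton] at hcover
    rw [hcover, Set.ncard_univ, Nat.card_fin] at hcard
    have := hsub u
    omega

/-- Lemma 1(a): if `G` is star `k`-critical subcubic (`k ∈ {5,6}`), `x` has degree 1
with neighbor `y`, `H = G - x`, and `c` is a star `k`-edge-coloring of `H`, then the
colors appearing at the neighbors of `y` in `H` exhaust `{1,…,k}`, and `y` has degree 3. -/
theorem lemma1a {V : Type*} [Fintype V] [DecidableEq V] (G : SimpleGraph V)
    [DecidableRel G.Adj] (hsub : ∀ v : V, G.degree v ≤ 3)
    (k : ℕ) (hk : k = 5 ∨ k = 6) (hcrit : StarCritical G k)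
    (x y : V) (hx : G.degree x = 1) (hxy : G.Adj x y)
    (c : Sym2 V → Fin k) (hc : IsStarEdgeColoring (G.deleteVert x) k c) :
    (⋃ u ∈ (G.deleteVert x).neighborSet y, colorsAt (G.deleteVert x) c u) = Set.univ ∧
      G.degree y = 3 :=
  lemma1a_general G hsub k hk hcrit x y hx hxy c hc
end
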